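/- arXiv:2101.03817 — 2 statements merged into one kernel-verified Lean document; each statement's English description precedes it below -/
import Mathlib

section
/- The abelianization of the wreath product G ≀_X H is isomorphic to (⊕_{X/H} G^{ab}) × H^{ab}, where X/H is the set of H-orbits on X. -/
/-! The map `(φ, h) ↦ ((∏_{x ∈ ω} [φ x])_ω, [h])` from `G ≀_X H` to `(⊕_{X/H} G^{ab}) × H^{ab}`
is a homomorphism because `h` only permutes points inside each orbit. Conversely, conjugation by
`h` carries `δ_x^s` to `δ_{h • x}^s`, so in the abelianization the class of `δ_x^s` depends only
on the orbit of `x` and on `[s] ∈ G^{ab}`; this gives the inverse map. Both composites are checked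
on the generators `δ_x^s` and `H`. -/

/-- The group of finitely supported functions `X → G` (pointwise multiplication). -/
def FinSupp (G X : Type*) [Group G] : Subgroup (X → G) where
  carrier := {φ | (Function.mulSupport φ).Finite}
  one_mem' := by simp [Function.mulSupport_one]
  mul_mem' := by
    intro a b ha hb
    exact ((ha.union hb).subset (Function.mulSupport_mul a b))
  inv_mem' := by
    intro a ha
    simpa [Function.mulSupport_inv] using ha

/-- The automorphism of `FinSupp G X` given by `h : H`, `(h.φ)(x) = φ(h⁻¹ • x)`. -/
def wreathAut (G H X : Type*) [Group G] [Group H] [MulAction H X] (h : H) :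
    FinSupp G X ≃* FinSupp G X where
  toFun φ := ⟨fun x => φ.1 (h⁻¹ • x), by
    have hsub : Function.mulSupport (fun x => φ.1 (h⁻¹ • x)) ⊆
        (fun x => h⁻¹ • x) ⁻¹' Function.mulSupport φ.1 := fun x hx => hx
    exact (φ.2.preimage ((MulAction.injective (h⁻¹ : H)).injOn)).subset hsub⟩
  invFun φ := ⟨fun x => φ.1 (h • x), by
    have hsub : Function.mulSupport (fun x => φ.1 (h • x)) ⊆
        (fun x => h • x) ⁻¹' Function.mulSupport φ.1 := fun x hx => hx
    exact (φ.2.preimage ((MulAction.injective h).injOn)).subset hsub⟩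
  left_inv φ := by ext x; simp
  right_inv φ := by ext x; simp
  map_mul' φ ψ := rfl

/-- The action of `H` on `FinSupp G X` by automorphisms. -/
def wreathAction (G H X : Type*) [Group G] [Group H] [MulAction H X] :
    H →* MulAut (FinSupp G X) where
  toFun := wreathAut G H X
  map_one' := by
    ext φ x
    simp [wreathAut]
  map_mul' a b := by
    ext φ x
    simp [wreathAut, mul_smul]

/-- The restricted wreath product `G ≀_X H`. -/
abbrev Wreath (G H X : Type*) [Group G] [Group H] [MulAction H X] :=
  FinSupp G X ⋊[wreathAction G H X] H

open scoped Classical in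
/-- The function `δ_x^s` sending `x` to `s` and everything else to `1`. -/
noncomputable def deltaFn {G X : Type*} [Group G] (x : X) (s : G) : FinSupp G X :=
  ⟨fun y => if y = x then s else 1, (Set.finite_singleton x).subset (by
    intro y hy
    simp only [Function.mem_mulSupport] at hy
    by_contra hxy
    simp only [Set.mem_singleton_iff] at hxy
    simp [hxy] at hy)⟩

namespace FinSupp

open Function
open scoped Classical

variable {G X : Type*} [Group G]

@[simp] lemma coe_mul_apply (φ ψ : FinSupp G X) (x : X) : (φ * ψ).1 x = φ.1 x * ψ.1 x := rfl

@[simp] lemma deltaFn_apply (x y : X) (s : G) : (deltaFn x s).1 y = if y = x then s else 1 := rfl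

noncomputable def deltaHom (x : X) : G →* FinSupp G X where
  toFun := deltaFn x
  map_one' := Subtype.ext <| funext fun y => by simp
  map_mul' s t := Subtype.ext <| funext fun y => by by_cases h : y = x <;> simp [h]

lemma closure_deltaFn : Subgroup.closure {φ : FinSupp G X | ∃ x s, φ = deltaFn x s} = ⊤ := by
  set D := Subgroup.closure {φ : FinSupp G X | ∃ x s, φ = deltaFn x s}
  suffices h : ∀ (S : Finset X) (φ : FinSupp G X), mulSupport φ.1 ⊆ S → φ ∈ D from
    eq_top_iff.2 fun φ _ => h φ.2.toFinset φ φ.2.coe_toFinset.ge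
  intro S
  induction S using Finset.induction_on with
  | empty =>
    intro φ hφ
    have hφ1 : φ = 1 :=
      Subtype.ext (mulSupport_eq_empty_iff.1 (Set.subset_empty_iff.1 (by simpa using hφ)))
    exact hφ1 ▸ D.one_mem
  | insert x S _ ih =>
    intro φ hφ
    have hrest : mulSupport ((deltaFn x (φ.1 x))⁻¹ * φ).1 ⊆ S := by
      intro y hy
      by_cases hyx : y = x
      · simp [hyx] at hy
      · have hy' : y ∈ mulSupport φ.1 := by simpa [hyx] using hy
        simpa [hyx] using hφ hy'
    rw [← mul_inv_cancel_left (deltaFn x (φ.1 x)) φ]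
    exact D.mul_mem (Subgroup.subset_closure ⟨x, _, rfl⟩) (ih _ hrest)

lemma hom_ext {M : Type*} [Monoid M] {f g : FinSupp G X →* M}
    (h : ∀ x s, f (deltaFn x s) = g (deltaFn x s)) : f = g :=
  MonoidHom.eq_of_eqOn_dense closure_deltaFn fun _ ⟨x, s, hφ⟩ => hφ ▸ h x s

variable {M : Type*} [CommMonoid M]

lemma finite_mulSupport_apply (k : X → G →* M) (φ : FinSupp G X) :
    (mulSupport fun x => k x (φ.1 x)).Finite :=
  φ.2.subset fun x hx hφx => hx (show k x (φ.1 x) = 1 by rw [hφx, map_one])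

noncomputable def prodHom (k : X → G →* M) : FinSupp G X →* M where
  toFun φ := ∏ᶠ x, k x (φ.1 x)
  map_one' := finprod_eq_one_of_forall_eq_one fun x => map_one (k x)
  map_mul' φ ψ := by
    simp only [coe_mul_apply, map_mul]
    exact finprod_mul_distrib (finite_mulSupport_apply k φ) (finite_mulSupport_apply k ψ)

@[simp] lemma prodHom_deltaFn (k : X → G →* M) (x : X) (s : G) :
    prodHom k (deltaFn x s) = k x s := by
  refine (finprod_eq_single _ x fun y hy => ?_).trans ?_ <;> simp [*]

end FinSupp

section Wreath

open SemidirectProduct FinSupp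

variable {G H X : Type*} [Group G] [Group H] [MulAction H X]

local notation "Q" => Quotient (MulAction.orbitRel H X)
local notation "π" => Quotient.mk (MulAction.orbitRel H X)

lemma wreathAction_deltaFn (h : H) (x : X) (s : G) :
    wreathAction G H X h (deltaFn x s) = deltaFn (h • x) s :=
  Subtype.ext <| funext fun y => by
    classical
    change (if h⁻¹ • y = x then s else 1) = if y = h • x then s else 1
    simp only [inv_smul_eq_iff]

variable (H) in
noncomputable def orbitProd : FinSupp G X →* FinSupp (Abelianization G) Q :=
  prodHom fun x => (deltaHom (π x)).comp Abelianization.of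

@[simp] lemma orbitProd_deltaFn (x : X) (s : G) :
    orbitProd H (deltaFn x s) = deltaFn (π x) (Abelianization.of s) :=
  prodHom_deltaFn _ x s

lemma orbitProd_wreathAction (h : H) (φ : FinSupp G X) :
    orbitProd H (wreathAction G H X h φ) = orbitProd H φ := by
  suffices (orbitProd H).comp (wreathAction G H X h).toMonoidHom = orbitProd H from
    DFunLike.congr_fun this φ
  refine FinSupp.hom_ext fun x s => ?_
  have hπ : π (h • x) = π x := Quotient.sound ⟨h, rfl⟩
  simp [wreathAction_deltaFn, hπ]

noncomputable def wreathAbelianizationHom :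
    Abelianization (Wreath G H X) →* FinSupp (Abelianization G) Q × Abelianization H :=
  Abelianization.lift <| SemidirectProduct.lift ((MonoidHom.inl _ _).comp (orbitProd H))
    ((MonoidHom.inr _ _).comp Abelianization.of) fun h => MonoidHom.ext fun φ => by
      simp [orbitProd_wreathAction]

variable (H) in
noncomputable def wreathDeltaHom (x : X) : G →* Abelianization (Wreath G H X) :=
  Abelianization.of.comp (inl.comp (deltaHom x))

@[simp] lemma wreathDeltaHom_apply (x : X) (s : G) :
    wreathDeltaHom H x s = Abelianization.of (inl (deltaFn x s) : Wreath G H X) := rfl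

lemma wreathDeltaHom_smul (h : H) (x : X) :
    wreathDeltaHom (G := G) H (h • x) = wreathDeltaHom H x :=
  MonoidHom.ext fun s => by
    simp [← wreathAction_deltaFn, inl_aut]

lemma wreathDeltaHom_out (x : X) :
    wreathDeltaHom (G := G) H (π x).out = wreathDeltaHom H x := by
  obtain ⟨h, hh⟩ := Quotient.exact (Quotient.out_eq (π x))
  rw [← hh, wreathDeltaHom_smul]

noncomputable def wreathAbelianizationInv :
    FinSupp (Abelianization G) Q × Abelianization H →* Abelianization (Wreath G H X) :=
  (prodHom fun ω => Abelianization.lift (wreathDeltaHom H ω.out)).coprod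
    (Abelianization.map inr)

@[simp] lemma wreathAbelianizationHom_of_inl (φ : FinSupp G X) :
    wreathAbelianizationHom (Abelianization.of (inl φ : Wreath G H X)) = (orbitProd H φ, 1) := by
  simp [wreathAbelianizationHom]

@[simp] lemma wreathAbelianizationHom_of_inr (h : H) :
    wreathAbelianizationHom (Abelianization.of (inr h : Wreath G H X)) =
      (1, Abelianization.of h) := by
  simp [wreathAbelianizationHom]

lemma wreathAbelianizationInv_comp_hom :
    wreathAbelianizationInv.comp wreathAbelianizationHom =
      MonoidHom.id (Abelianization (Wreath G H X)) := by
  refine Abelianization.hom_ext _ _ <| SemidirectProduct.hom_ext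
    (FinSupp.hom_ext fun x s => ?_) (MonoidHom.ext fun h => ?_)
  · simp [wreathAbelianizationInv, wreathDeltaHom_out]
  · simp [wreathAbelianizationInv]

lemma wreathAbelianizationHom_comp_inv :
    wreathAbelianizationHom.comp wreathAbelianizationInv =
      MonoidHom.id (FinSupp (Abelianization G) Q × Abelianization H) := by
  rw [wreathAbelianizationInv, MonoidHom.comp_coprod, ← MonoidHom.coprod_inl_inr]
  congr 1
  · refine FinSupp.hom_ext fun ω a => ?_
    refine QuotientGroup.induction_on a fun s => ?_
    change wreathAbelianizationHom (prodHom _ (deltaFn ω (Abelianization.of s))) =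
      (deltaFn ω (Abelianization.of s), 1)
    simp
  · refine Abelianization.hom_ext _ _ (MonoidHom.ext fun h => ?_)
    simp

noncomputable def wreathAbelianizationEquiv :
    Abelianization (Wreath G H X) ≃* FinSupp (Abelianization G) Q × Abelianization H :=
  MonoidHom.toMulEquiv wreathAbelianizationHom wreathAbelianizationInv
    wreathAbelianizationInv_comp_hom wreathAbelianizationHom_comp_inv

end Wreath

/-- The abelianization of `G ≀_X H` is isomorphic to `(⊕_{X/H} G^{ab}) × H^{ab}`. -/
theorem stmt4 (G H X : Type*) [Group G] [Group H] [MulAction H X] :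
    Nonempty (Abelianization (Wreath G H X) ≃*
      (FinSupp (Abelianization G) (Quotient (MulAction.orbitRel H X))) × Abelianization H) :=
  ⟨wreathAbelianizationEquiv⟩
end

section
/- Let G be a finitely generated group and H a quotient of G. If every Schreier graph of G (with respect to some fixed finite symmetric generating set) has at most one end, then every Schreier graph of H has at most one end. In other words, property FW passes to quotients of finitely generated groups. -/
open scoped Classical in
/-- The number of ends of a graph: the supremum over finite vertex sets `K` of the
number of infinite connected components of the induced subgraph on the complement of `K`. -/
noncomputable def numEnds {V : Type*} (Γ : SimpleGraph V) : ℕ∞ :=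
  ⨆ K : Finset V,
    {C : (SimpleGraph.induce ((↑K : Set V)ᶜ) Γ).ConnectedComponent | C.supp.Infinite}.encard

/-- The orbital graph of an action of `G` on `X` with respect to `S ⊆ G`:
vertices `X`, an edge between `x` and `s • x` for each `s ∈ S`. -/
def orbitalGraph (G : Type*) [Group G] (S : Set G) (X : Type*) [MulAction G X] :
    SimpleGraph X where
  Adj x y := x ≠ y ∧ ∃ s ∈ S, (s • x = y ∨ s • y = x)
  symm := by
    refine ⟨?_⟩
    rintro x y ⟨h, s, hs, h'⟩
    exact ⟨h.symm, s, hs, h'.symm⟩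
  loopless := by refine ⟨?_⟩; rintro x ⟨h, -⟩; exact h rfl

/-- The Schreier graph `Sch(G, H; S)`: vertices the left cosets `G ⧸ H`,
an edge between `gH` and `sgH` for each `s ∈ S`. -/
def schreierGraph (G : Type*) [Group G] (S : Set G) (H : Subgroup G) :
    SimpleGraph (G ⧸ H) where
  Adj x y := x ≠ y ∧ ∃ s ∈ S, ∃ g : G,
      (((g : G ⧸ H) = x ∧ ((s * g : G) : G ⧸ H) = y)) ∨
      (((g : G ⧸ H) = y ∧ ((s * g : G) : G ⧸ H) = x))
  symm := by
    refine ⟨?_⟩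
    rintro x y ⟨h, s, hs, g, hg⟩
    exact ⟨h.symm, s, hs, g, hg.symm⟩
  loopless := by refine ⟨?_⟩; rintro x ⟨h, -⟩; exact h rfl

/-- The Cayley graph of `G` with respect to `S`. -/
def cayleyGraph (G : Type*) [Group G] (S : Set G) : SimpleGraph G :=
  orbitalGraph G S G

/-- `S` is a finite symmetric generating set of `G`. -/
def IsSymmGen {G : Type*} [Group G] (S : Finset G) : Prop :=
  (∀ s ∈ S, s⁻¹ ∈ S) ∧ Subgroup.closure (S : Set G) = ⊤

/-- A group has property FW if all of its Schreier graphs with respect to a finite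
symmetric generating set have at most one end. -/
def HasFW (G : Type*) [Group G] : Prop :=
  ∀ S : Finset G, IsSymmGen S → ∀ L : Subgroup G, numEnds (schreierGraph G (↑S) L) ≤ 1

/-!
The Schreier graph of `G` relative to `π⁻¹ L` with generators `S` is isomorphic to that of `H`
relative to `L` with generators `π S`, so it suffices to compare two finite generating sets of `H`.
Write every element of `π S` as a word in `T`. Outside a finite set `K'` (the translates of `K` by
the inverses of all suffixes of these words) each `π S`-edge is shadowed by a `T`-path avoiding `K`.
Every infinite `T`-component outside `K` then meets an infinite `π S`-component outside `K'`, and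
two different ones cannot meet the same one, so the number of ends can only drop.
-/

open SimpleGraph

section Ends

variable {V V' : Type*}

lemma numEnds_eq_iSup_componentCompl (Γ : SimpleGraph V) :
    numEnds Γ = ⨆ K : Finset V, {C : Γ.ComponentCompl K | (C : Set V).Infinite}.encard := by
  unfold numEnds
  congr! with K C
  have hC : (C : Set V) = Subtype.val '' C.supp := by
    ext v
    simp [ComponentCompl.mem_supp_iff, ConnectedComponent.mem_supp_iff]
  rw [hC, Set.finite_image_iff Subtype.val_injective.injOn]

lemma SimpleGraph.Iso.numEnds_le {Γ : SimpleGraph V} {Γ' : SimpleGraph V'} (φ : Γ ≃g Γ') :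
    numEnds Γ ≤ numEnds Γ' := by
  classical
  refine iSup_le fun K => le_iSup_of_le (K.image φ) ?_
  have hφK : Set.BijOn φ (↑K)ᶜ (↑(K.image φ))ᶜ := by
    rw [Finset.coe_image]
    exact (φ.injective.injOn.bijOn_image).compl φ.bijective
  let ψ := φ.induce hφK
  rw [← ψ.connectedComponentEquiv.injective.injOn.encard_image]
  refine Set.encard_le_encard ?_
  rintro _ ⟨C, hC, rfl⟩
  exact Set.infinite_coe_iff.mp
    ((ConnectedComponent.isoEquivSupp ψ C).infinite_iff.mp hC.to_subtype)

lemma SimpleGraph.Iso.numEnds_eq {Γ : SimpleGraph V} {Γ' : SimpleGraph V'} (φ : Γ ≃g Γ') :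
    numEnds Γ = numEnds Γ' :=
  le_antisymm φ.numEnds_le φ.symm.numEnds_le

lemma SimpleGraph.ComponentCompl.eq_of_mem_of_mem {G : SimpleGraph V} {K : Set V} {v : V}
    {C D : G.ComponentCompl K} (hC : v ∈ C) (hD : v ∈ D) : C = D := by
  obtain ⟨_, rfl⟩ := hC
  obtain ⟨_, rfl⟩ := hD
  rfl

variable {Γ₁ Γ₂ : SimpleGraph V}

lemma SimpleGraph.ComponentCompl.mem_of_mem_of_forall_adj_mem {K K' : Set V}
    (h : ∀ a b, a ∉ K' → b ∉ K' → Γ₁.Adj a b → ∀ D : Γ₂.ComponentCompl K, a ∈ D → b ∈ D)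
    {C : Γ₁.ComponentCompl K'} {x y : V} (hx : x ∈ C) (hy : y ∈ C)
    {D : Γ₂.ComponentCompl K} (hxD : x ∈ D) : y ∈ D := by
  obtain ⟨hx', rfl⟩ := hx
  obtain ⟨hy', hyx⟩ := hy
  suffices ∀ z, Relation.ReflTransGen (Γ₁.induce K'ᶜ).Adj ⟨x, hx'⟩ z → z.1 ∈ D from
    this ⟨y, hy'⟩ ((reachable_iff_reflTransGen _ _).mp (ConnectedComponent.exact hyx.symm))
  intro z hz
  induction hz with
  | refl => exact hxD
  | @tail b c _ hadj ih => exact h b c b.2 c.2 hadj D ih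

theorem numEnds_le_of_forall_adj_mem_componentCompl [Γ₁.LocallyFinite] (h₁ : Γ₁.Preconnected)
    (h : ∀ K : Finset V, ∃ K' : Finset V, ∀ a b, a ∉ K' → b ∉ K' → Γ₁.Adj a b →
      ∀ D : Γ₂.ComponentCompl K, a ∈ D → b ∈ D) :
    numEnds Γ₂ ≤ numEnds Γ₁ := by
  have : Fact Γ₁.Preconnected := ⟨h₁⟩
  simp only [numEnds_eq_iSup_componentCompl]
  refine iSup_le fun K => ?_
  obtain ⟨K', hK'⟩ := h K
  set F : Set V := ⋃ C ∈ {C : Γ₁.ComponentCompl K' | (C : Set V).Finite}, C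
  -- finitely many components outside `K'`, since `Γ₁` is locally finite and connected
  have hF : F.Finite := (Set.toFinite _).biUnion fun C hC => hC
  have hφ : ∀ D : {D : Γ₂.ComponentCompl K // (D : Set V).Infinite},
      ∃ C : {C : Γ₁.ComponentCompl K' // (C : Set V).Infinite}, ∃ x ∈ D.1, x ∈ C.1 := by
    rintro ⟨D, hD⟩
    obtain ⟨x, hxD, hx⟩ := (hD.sdiff (K'.finite_toSet.union hF)).nonempty
    rw [Set.mem_union, not_or] at hx
    refine ⟨⟨Γ₁.componentComplMk hx.1, fun hfin => hx.2 ?_⟩, x, hxD, componentComplMk_mem _ _⟩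
    exact Set.mem_biUnion hfin (componentComplMk_mem _ _)
  choose φ x hxD hxC using hφ
  refine (ENat.card_le_card_of_injective (f := φ) fun D₁ D₂ hφD => Subtype.ext ?_).trans
    (le_iSup_of_le K' le_rfl)
  have hx₁ : x D₁ ∈ D₂.1 :=
    ComponentCompl.mem_of_mem_of_forall_adj_mem hK' (hφD ▸ hxC D₂) (hxC D₁) (hxD D₂)
  exact ComponentCompl.eq_of_mem_of_mem (hxD D₁) hx₁

end Ends

section OrbitalGraph

variable {H X : Type*} [Group H] [MulAction H X] {S : Set H}

lemma orbitalGraph_adj_smul {s : H} (hs : s ∈ S) {x : X} (h : s • x ≠ x) :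
    (orbitalGraph H S X).Adj x (s • x) :=
  ⟨h.symm, s, hs, Or.inl rfl⟩

lemma orbitalGraph_reachable_smul (hS : Subgroup.closure S = ⊤) (h : H) (x : X) :
    (orbitalGraph H S X).Reachable x (h • x) := by
  induction (hS ▸ Subgroup.mem_top h : h ∈ Subgroup.closure S) using Subgroup.closure_induction
    generalizing x with
  | mem s hs =>
    by_cases hsx : s • x = x
    · rw [hsx]
    · exact (orbitalGraph_adj_smul hs hsx).reachable
  | one => rw [one_smul]
  | mul a b _ _ iha ihb => rw [mul_smul]; exact (ihb x).trans (iha (b • x))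
  | inv a _ iha => simpa using (iha (a⁻¹ • x)).symm

lemma orbitalGraph_preconnected [MulAction.IsPretransitive H X] (hS : Subgroup.closure S = ⊤) :
    (orbitalGraph H S X).Preconnected := fun x y => by
  obtain ⟨h, rfl⟩ := MulAction.exists_smul_eq H x y
  exact orbitalGraph_reachable_smul hS h x

lemma orbitalGraph_neighborSet_finite (hS : S.Finite) (x : X) :
    ((orbitalGraph H S X).neighborSet x).Finite := by
  refine ((hS.image (· • x)).union (hS.image (·⁻¹ • x))).subset ?_
  rintro y ⟨-, s, hs, rfl | rfl⟩
  · exact Or.inl ⟨s, hs, rfl⟩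
  · exact Or.inr ⟨s, hs, inv_smul_smul s y⟩

lemma orbitalGraph_smul_mem_componentCompl_iff {K : Set X} {s : H} (hs : s ∈ S) {x : X}
    (hx : x ∉ K) (hsx : s • x ∉ K) {C : (orbitalGraph H S X).ComponentCompl K} :
    s • x ∈ C ↔ x ∈ C := by
  by_cases h : s • x = x
  · rw [h]
  · have hadj := orbitalGraph_adj_smul hs h
    exact ⟨fun hC => ComponentCompl.mem_of_adj _ _ hC hx hadj.symm,
      fun hC => ComponentCompl.mem_of_adj _ _ hC hsx hadj⟩

lemma orbitalGraph_list_prod_smul_mem_componentCompl_iff {K : Set X} {l : List H}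
    (hl : ∀ t ∈ l, t ∈ S) {x : X} (hK : ∀ l' ∈ l.tails, l'.prod • x ∉ K)
    {C : (orbitalGraph H S X).ComponentCompl K} :
    l.prod • x ∈ C ↔ x ∈ C := by
  induction l with
  | nil => simp
  | cons t l ih =>
    have hlK : l.prod • x ∉ K := hK l (by simp)
    have htlK : t • l.prod • x ∉ K := by simpa [mul_smul] using hK (t :: l) (by simp)
    rw [List.prod_cons, mul_smul,
      orbitalGraph_smul_mem_componentCompl_iff (hl t (by simp)) hlK htlK,
      ih (fun u hu => hl u (by simp [hu])) (fun l' hl' => hK l' (by simp [hl']))]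

theorem numEnds_orbitalGraph_le [MulAction.IsPretransitive H X] {S T : Finset H}
    (hS : Subgroup.closure (S : Set H) = ⊤) (hST : ∀ s ∈ S, s ∈ Submonoid.closure (T : Set H)) :
    numEnds (orbitalGraph H T X) ≤ numEnds (orbitalGraph H S X) := by
  classical
  let _ : (orbitalGraph H S X).LocallyFinite := fun x =>
    (orbitalGraph_neighborSet_finite S.finite_toSet x).fintype
  refine numEnds_le_of_forall_adj_mem_componentCompl (orbitalGraph_preconnected hS) fun K => ?_
  choose! l hlT hl using fun s hs => Submonoid.exists_list_of_mem_closure (hST s hs)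
  let P : Finset H := S.biUnion fun s => ((l s).tails.map List.prod).toFinset
  refine ⟨P.biUnion fun u => K.image (u⁻¹ • ·), ?_⟩
  have hP : ∀ a ∉ P.biUnion fun u => K.image (u⁻¹ • ·), ∀ s ∈ S, ∀ l' ∈ (l s).tails,
      l'.prod • a ∉ K := by
    intro a ha s hs l' hl' hK
    refine ha (Finset.mem_biUnion.mpr
      ⟨l'.prod, ?_, Finset.mem_image.mpr ⟨_, hK, inv_smul_smul _ a⟩⟩)
    exact Finset.mem_biUnion.mpr ⟨s, hs, List.mem_toFinset.mpr (List.mem_map_of_mem hl')⟩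
  rintro a b ha hb ⟨-, s, hs, rfl | rfl⟩ D hD
  · rwa [← hl s hs, orbitalGraph_list_prod_smul_mem_componentCompl_iff (hlT s hs) (hP a ha s hs)]
  · rwa [← hl s hs, orbitalGraph_list_prod_smul_mem_componentCompl_iff (hlT s hs) (hP b hb s hs)]
      at hD

end OrbitalGraph

section SchreierGraph

variable {G H : Type*} [Group G] [Group H]

lemma schreierGraph_eq_orbitalGraph (S : Set G) (L : Subgroup G) :
    schreierGraph G S L = orbitalGraph G S (G ⧸ L) := by
  ext x y
  refine and_congr_right fun _ => exists_congr fun s => and_congr_right fun _ => ⟨?_, ?_⟩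
  · rintro ⟨g, ⟨rfl, rfl⟩ | ⟨rfl, rfl⟩⟩
    exacts [Or.inl rfl, Or.inr rfl]
  · rintro (rfl | rfl)
    · obtain ⟨g, rfl⟩ := QuotientGroup.mk_surjective x
      exact ⟨g, Or.inl ⟨rfl, rfl⟩⟩
    · obtain ⟨g, rfl⟩ := QuotientGroup.mk_surjective y
      exact ⟨g, Or.inr ⟨rfl, rfl⟩⟩

def orbitalGraphIsoOfEquiv {X Y : Type*} [MulAction G X] [MulAction H Y] (π : G →* H)
    (S : Set G) (e : X ≃ Y) (he : ∀ (g : G) (x : X), e (g • x) = π g • e x) :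
    orbitalGraph G S X ≃g orbitalGraph H (π '' S) Y where
  toEquiv := e
  map_rel_iff' {x y} := by
    simp [orbitalGraph, ← he, e.injective.eq_iff]

noncomputable def quotientComapEquiv (π : G →* H) (hπ : Function.Surjective π)
    (L : Subgroup H) : G ⧸ L.comap π ≃ H ⧸ L :=
  Equiv.ofBijective (Quotient.map' π fun a b h => by
      rw [QuotientGroup.leftRel_apply] at h ⊢
      simpa using h)
    ⟨by
      rintro ⟨a⟩ ⟨b⟩ h
      exact Quotient.sound' (by simpa [QuotientGroup.leftRel_apply] using Quotient.exact' h),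
     by
      rintro ⟨y⟩
      obtain ⟨g, rfl⟩ := hπ y
      exact ⟨QuotientGroup.mk g, rfl⟩⟩

lemma quotientComapEquiv_smul (π : G →* H) (hπ : Function.Surjective π) (L : Subgroup H)
    (g : G) (x : G ⧸ L.comap π) :
    quotientComapEquiv π hπ L (g • x) = π g • quotientComapEquiv π hπ L x := by
  induction x using QuotientGroup.induction_on with | H x
  exact congrArg _ (map_mul π g x)

end SchreierGraph

lemma IsSymmGen.submonoid_closure_eq_top {G : Type*} [Group G] {S : Finset G}
    (hS : IsSymmGen S) : Submonoid.closure (S : Set G) = ⊤ := by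
  rw [← Subgroup.top_toSubmonoid, ← hS.2, Subgroup.closure_toSubmonoid,
    Set.union_eq_left.mpr fun s hs => by simpa using hS.1 s⁻¹ hs]

/-- Property FW passes to quotients of finitely generated groups. -/
theorem stmt11 {G H : Type*} [Group G] [Group H] (S : Finset G) (hS : IsSymmGen S)
    (hG : ∀ L : Subgroup G, numEnds (schreierGraph G (↑S) L) ≤ 1)
    (π : G →* H) (hπ : Function.Surjective π) : HasFW H := by
  classical
  intro T hT L
  have hπS : Subgroup.closure ((S.image π : Finset H) : Set H) = ⊤ := by
    rw [Finset.coe_image, ← MonoidHom.map_closure, hS.2, ← MonoidHom.range_eq_map,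
      MonoidHom.range_eq_top.mpr hπ]
  have hπST : ∀ s ∈ S.image π, s ∈ Submonoid.closure (T : Set H) := fun s _ => by
    simp [hT.submonoid_closure_eq_top]
  calc numEnds (schreierGraph H T L)
      ≤ numEnds (orbitalGraph H (S.image π : Finset H) (H ⧸ L)) := by
        rw [schreierGraph_eq_orbitalGraph]
        exact numEnds_orbitalGraph_le hπS hπST
    _ = numEnds (schreierGraph G S (L.comap π)) := by
        rw [schreierGraph_eq_orbitalGraph, Finset.coe_image]
        exact (orbitalGraphIsoOfEquiv π S _ (quotientComapEquiv_smul π hπ L)).numEnds_eq.symm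
    _ ≤ 1 := hG _
end
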